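/- For every natural number p, one has S(m_p) < VZ(m_p) where m_p = 1287 · 429^(12p+1), and the difference VZ(m_p) − S(m_p) tends to +∞ as p → ∞. -/

import Mathlib

open Filter

/-!
Writing `h = h(m)` and `k = m / h`, one has `VZ(m) - S(m) = k² / 4 - k h + 7 / 4`, which exceeds `k`
as soon as `k ≥ 8 h`. For `m_p = 3 · 429ⁿ = 3ⁿ⁺¹ · 11ⁿ · 13ⁿ` with `n = 12p + 2` the largest
prime power is `h = 13ⁿ`, so `k = 3 · 33ⁿ`, and `3 · 33ⁿ ≥ 8 · 13ⁿ` because `n ≥ 2`.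
-/

/-- `hpp m` is the largest prime power dividing `m`:
the maximum over primes `p` dividing `m` of `p ^ (ν_p m)`, with the convention `hpp 1 = 1`. -/
def hpp (m : ℕ) : ℕ := max 1 (m.primeFactors.sup fun p => p ^ m.factorization p)

/-- The Viro–Zvonilov bound. -/
def VZ (m : ℕ) : ℚ :=
  ((m : ℚ) - 3) ^ 2 / 4 + ((m : ℚ) ^ 2 - (hpp m : ℚ) ^ 2) / (4 * (hpp m : ℚ) ^ 2)

/-- The bound of the paper's main theorem. -/
def S (m : ℕ) : ℚ := ((m : ℚ) - 1) ^ 2 / 4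

/-- The degrees `m_p = 1287·429^(12p+1)`. -/
def mp (p : ℕ) : ℕ := 1287 * 429 ^ (12 * p + 1)

lemma one_le_hpp (m : ℕ) : 1 ≤ hpp m := le_max_left _ _

lemma hpp_le_of_forall_le {m b : ℕ} (hb : 1 ≤ b)
    (h : ∀ q ∈ m.primeFactors, q ^ m.factorization q ≤ b) : hpp m ≤ b :=
  max_le hb (Finset.sup_le h)

lemma VZ_sub_S (m : ℕ) : VZ m - S m = ((m : ℚ) / hpp m) ^ 2 / 4 - m + 7 / 4 := by
  have : (hpp m : ℚ) ≠ 0 := by have := one_le_hpp m; positivity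
  rw [VZ, S]
  field_simp
  ring

lemma div_hpp_lt_VZ_sub_S {m : ℕ} (hm : 8 * hpp m ^ 2 ≤ m) :
    (m : ℚ) / hpp m < VZ m - S m := by
  have hh : (1 : ℚ) ≤ hpp m := by exact_mod_cast one_le_hpp m
  set k : ℚ := m / hpp m with hk
  have hmk : (m : ℚ) = k * hpp m := by rw [hk, div_mul_cancel₀ _ (by positivity)]
  have h8 : 8 * (hpp m : ℚ) ≤ k := by
    rw [hk, le_div_iff₀ (by positivity)]
    exact_mod_cast (by linarith : 8 * hpp m * hpp m ≤ m)
  have hk8 : 8 ≤ k := by linarith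
  rw [VZ_sub_S, ← hk, hmk]
  nlinarith [mul_le_mul_of_nonneg_left h8 (by linarith : (0 : ℚ) ≤ k)]

lemma factorization_three_eleven_thirteen (n : ℕ) :
    (3 ^ (n + 1) * 11 ^ n * 13 ^ n).factorization
      = Finsupp.single 3 (n + 1) + Finsupp.single 11 n + Finsupp.single 13 n := by
  rw [Nat.factorization_mul (by positivity) (by positivity),
    Nat.factorization_mul (by positivity) (by positivity),
    Nat.prime_three.factorization_pow, (by norm_num : Nat.Prime 11).factorization_pow,
    (by norm_num : Nat.Prime 13).factorization_pow]

lemma hpp_three_eleven_thirteen_le {n : ℕ} (hn : 1 ≤ n) :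
    hpp (3 ^ (n + 1) * 11 ^ n * 13 ^ n) ≤ 13 ^ n := by
  apply hpp_le_of_forall_le (Nat.one_le_pow _ _ (by norm_num))
  intro q _
  have h3 : 3 ^ (n + 1) ≤ 13 ^ n :=
    calc 3 ^ (n + 1) ≤ 3 ^ (2 * n) := Nat.pow_le_pow_right (by norm_num) (by omega)
      _ = 9 ^ n := by rw [pow_mul]; norm_num
      _ ≤ 13 ^ n := Nat.pow_le_pow_left (by norm_num) n
  have h11 : 11 ^ n ≤ 13 ^ n := Nat.pow_le_pow_left (by norm_num) n
  have h1 : 1 ≤ 13 ^ n := Nat.one_le_pow _ _ (by norm_num)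
  simp only [factorization_three_eleven_thirteen, Finsupp.add_apply, Finsupp.single_apply]
  split_ifs <;> subst_vars <;> simp_all

lemma mp_eq (p : ℕ) : mp p = 3 ^ (12 * p + 2 + 1) * 11 ^ (12 * p + 2) * 13 ^ (12 * p + 2) := by
  rw [mp, show (429 : ℕ) = 3 * 11 * 13 from rfl, mul_pow, mul_pow]
  ring

lemma eight_mul_thirteen_pow_le {n : ℕ} (hn : 2 ≤ n) : 8 * 13 ^ n ≤ 3 * 33 ^ n := by
  obtain ⟨k, rfl⟩ := Nat.exists_eq_add_of_le' hn
  have : 13 ^ k ≤ 33 ^ k := Nat.pow_le_pow_left (by norm_num) k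
  rw [pow_add, pow_add]
  omega

lemma three_mul_pow_lt_VZ_sub_S {n : ℕ} (hn : 2 ≤ n) :
    3 * (33 : ℚ) ^ n < VZ (3 ^ (n + 1) * 11 ^ n * 13 ^ n) - S (3 ^ (n + 1) * 11 ^ n * 13 ^ n) := by
  set m := 3 ^ (n + 1) * 11 ^ n * 13 ^ n
  have hh : hpp m ≤ 13 ^ n := hpp_three_eleven_thirteen_le (by omega)
  have hm : m = 3 * 33 ^ n * 13 ^ n := by
    rw [show (33 : ℕ) = 3 * 11 from rfl, mul_pow]; ring
  have h8 : 8 * hpp m ^ 2 ≤ m := by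
    calc 8 * hpp m ^ 2 ≤ 8 * 13 ^ n * 13 ^ n := by rw [sq, mul_assoc]; gcongr
      _ ≤ 3 * 33 ^ n * 13 ^ n := Nat.mul_le_mul_right _ (eight_mul_thirteen_pow_le hn)
      _ = m := hm.symm
  calc 3 * (33 : ℚ) ^ n = m / (13 ^ n : ℕ) := by
        rw [hm]; push_cast; field_simp
    _ ≤ m / hpp m := by
        gcongr
        exact_mod_cast one_le_hpp m
    _ < VZ m - S m := div_hpp_lt_VZ_sub_S h8

/-- `S(m_p) < VZ(m_p)` for all `p`, and `VZ(m_p) − S(m_p) → +∞` as `p → ∞`. -/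
theorem S_lt_VZ_mp :
    (∀ p : ℕ, S (mp p) < VZ (mp p)) ∧
      Tendsto (fun p : ℕ => VZ (mp p) - S (mp p)) atTop atTop := by
  have key (p : ℕ) : 3 * (33 : ℚ) ^ (12 * p + 2) < VZ (mp p) - S (mp p) := by
    rw [mp_eq]
    exact three_mul_pow_lt_VZ_sub_S (by omega)
  refine ⟨fun p => sub_pos.mp (lt_trans (by positivity) (key p)), ?_⟩
  refine tendsto_atTop_mono (fun p => (key p).le) ?_
  exact ((tendsto_pow_atTop_atTop_of_one_lt (by norm_num : (1 : ℚ) < 33)).const_mul_atTop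
    (by norm_num)).comp (tendsto_atTop_mono (fun p => show p ≤ 12 * p + 2 by omega) tendsto_id)
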